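/- One has the identity (θ, 0, 0, 0, 0, 0) = −η₁ + 2η₃ − η₄ + 2η₆ + 2η₈ + 2η₉ in ℂ⁶, and the ℤ-submodule of ℂ⁶ generated by the two vectors (1,0,0,0,0,0) and (θ,0,0,0,0,0) is a free ℤ-module of rank 2 which is a direct summand of the ℤ-submodule generated by {η₁, η₂, η₃, η₄, η₅, η₆, η₇, η₈, η₉}. -/
import Mathlib

open Complex

/-- The basis vectors `η₁, …, η₉` of the range of the Chern–Connes character `𝐓₄`. -/
noncomputable def η (θ : ℝ) : Fin 9 → Fin 6 → ℂ :=
  ![![1/2, 0, 0, 1/2, 0, 0],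
    ![1/2, (1 - I)/4, 0, 0, 0, 0],
    ![1/4, 1/4, 0, 1/4, 0, 0],
    ![1/2, 0, 0, 0, 1/2, 0],
    ![1/2, 0, (1 - I)/4, 0, 0, 0],
    ![1/4, 0, 1/4, 0, 1/4, 0],
    ![(θ : ℂ)/4, (1 + I)/8, (1 + I)/8, 1/8, 1/8, 1/4],
    ![(θ : ℂ)/4, (-1 + I)/8, (-1 + I)/8, -(1/8), -(1/8), -(1/4)],
    ![(θ : ℂ)/4, (-1 - I)/8, (-1 - I)/8, 1/8, 1/8, 1/4]]

/-- The images `ξ₁′, …, ξ₆′` of the generators of `K₀(A_θ ⋊ ℤ₂)` under `𝐓₄ ∘ ι⋆`. -/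
noncomputable def ξ' (θ : ℝ) : Fin 6 → Fin 6 → ℂ :=
  ![![1, 0, 0, 0, 0, 0],
    ![1/2, 0, 0, 1/2, 0, 0],
    ![1/2, 0, 0, 0, 0, 1/2],
    ![1/2, 0, 0, 0, 0, 1/2],
    ![1/2, 0, 0, 0, 1/2, 0],
    ![(θ : ℂ)/2, 0, 0, 1/4, -(1/4), 0]]

/-- The complement family: the last seven `η`'s. -/
noncomputable def μv (θ : ℝ) : Fin 7 → Fin 6 → ℂ :=
  ![η θ 2, η θ 3, η θ 4, η θ 5, η θ 6, η θ 7, η θ 8]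

lemma irr_combo {θ : ℝ} (hθ : Irrational θ) {a b : ℤ} (h : (a : ℝ) + (b : ℝ) * θ = 0) :
    a = 0 ∧ b = 0 := by
  by_cases hb : b = 0
  · subst hb
    simp at h
    exact ⟨by exact_mod_cast h, rfl⟩
  · exfalso
    apply hθ
    refine ⟨(-a / b : ℚ), ?_⟩
    have hb' : (b : ℝ) ≠ 0 := Int.cast_ne_zero.mpr hb
    push_cast
    field_simp
    linarith
lemma complex_theta {θ : ℝ} (hθ : Irrational θ) {a b : ℤ} (h : (a : ℂ) + (b : ℂ) * (θ : ℂ) = 0) :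
    a = 0 ∧ b = 0 := by
  apply irr_combo hθ
  have := congrArg Complex.re h
  simpa using this

lemma complex_int_pair {a b : ℤ} (h : (a : ℂ) + (b : ℂ) * I = 0) : a = 0 ∧ b = 0 := by
  have hre := congrArg Complex.re h
  have him := congrArg Complex.im h
  simp at hre him
  exact ⟨by exact_mod_cast hre, by exact_mod_cast him⟩

lemma hv2eq (θ : ℝ) :
    (![(θ : ℂ), 0, 0, 0, 0, 0] : Fin 6 → ℂ)
      = -η θ 0 + (2 : ℤ) • η θ 2 - η θ 3 + (2 : ℤ) • η θ 5
        + (2 : ℤ) • η θ 7 + (2 : ℤ) • η θ 8 := by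
  rw [show η θ 0 = ![1/2, 0, 0, 1/2, 0, 0] from rfl,
      show η θ 2 = ![1/4, 1/4, 0, 1/4, 0, 0] from rfl,
      show η θ 3 = ![1/2, 0, 0, 0, 1/2, 0] from rfl,
      show η θ 5 = ![1/4, 0, 1/4, 0, 1/4, 0] from rfl,
      show η θ 7 = ![(θ : ℂ)/4, (-1 + I)/8, (-1 + I)/8, -(1/8), -(1/8), -(1/4)] from rfl,
      show η θ 8 = ![(θ : ℂ)/4, (-1 - I)/8, (-1 - I)/8, 1/8, 1/8, 1/4] from rfl]
  funext i
  fin_cases i <;> simp [show (5:Fin 6) = Fin.succ 4 from rfl, Matrix.cons_val_succ] <;> ring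

lemma hv1eq (θ : ℝ) :
    (![1, 0, 0, 0, 0, 0] : Fin 6 → ℂ)
      = η θ 0 + η θ 1 - (2 : ℤ) • η θ 2 + η θ 3 + η θ 4 - (2 : ℤ) • η θ 5
        + η θ 6 - η θ 8 := by
  rw [show η θ 0 = ![1/2, 0, 0, 1/2, 0, 0] from rfl,
      show η θ 1 = ![1/2, (1 - I)/4, 0, 0, 0, 0] from rfl,
      show η θ 2 = ![1/4, 1/4, 0, 1/4, 0, 0] from rfl,
      show η θ 3 = ![1/2, 0, 0, 0, 1/2, 0] from rfl,
      show η θ 4 = ![1/2, 0, (1 - I)/4, 0, 0, 0] from rfl,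
      show η θ 5 = ![1/4, 0, 1/4, 0, 1/4, 0] from rfl,
      show η θ 6 = ![(θ : ℂ)/4, (1 + I)/8, (1 + I)/8, 1/8, 1/8, 1/4] from rfl,
      show η θ 8 = ![(θ : ℂ)/4, (-1 - I)/8, (-1 - I)/8, 1/8, 1/8, 1/4] from rfl]
  funext i
  fin_cases i <;> simp [show (5:Fin 6) = Fin.succ 4 from rfl, Matrix.cons_val_succ] <;> ring

lemma heta1eq (θ : ℝ) :
    η θ 1 = ![1, 0, 0, 0, 0, 0] + ![(θ : ℂ), 0, 0, 0, 0, 0]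
      - η θ 4 - η θ 6 - (2 : ℤ) • η θ 7 - η θ 8 := by
  rw [show η θ 1 = ![1/2, (1 - I)/4, 0, 0, 0, 0] from rfl,
      show η θ 4 = ![1/2, 0, (1 - I)/4, 0, 0, 0] from rfl,
      show η θ 6 = ![(θ : ℂ)/4, (1 + I)/8, (1 + I)/8, 1/8, 1/8, 1/4] from rfl,
      show η θ 7 = ![(θ : ℂ)/4, (-1 + I)/8, (-1 + I)/8, -(1/8), -(1/8), -(1/4)] from rfl,
      show η θ 8 = ![(θ : ℂ)/4, (-1 - I)/8, (-1 - I)/8, 1/8, 1/8, 1/4] from rfl]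
  funext i
  fin_cases i <;> simp [show (5:Fin 6) = Fin.succ 4 from rfl, Matrix.cons_val_succ] <;> ring

/-- `(θ,0,0,0,0,0) = -η₁ + 2η₃ - η₄ + 2η₆ + 2η₈ + 2η₉`, and the
ℤ-submodule generated by `(1,0,…,0)` and `(θ,0,…,0)` is free of rank 2 and a direct
summand of the ℤ-submodule generated by the `η`'s. -/
theorem theta_vector_and_direct_summand (θ : ℝ) (hθ : Irrational θ) :
    (![(θ : ℂ), 0, 0, 0, 0, 0] : Fin 6 → ℂ)
      = -η θ 0 + (2 : ℤ) • η θ 2 - η θ 3 + (2 : ℤ) • η θ 5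
        + (2 : ℤ) • η θ 7 + (2 : ℤ) • η θ 8 ∧
    Module.Free ℤ
      (Submodule.span ℤ
        ({![1, 0, 0, 0, 0, 0], ![(θ : ℂ), 0, 0, 0, 0, 0]} : Set (Fin 6 → ℂ))) ∧
    Module.finrank ℤ
      (Submodule.span ℤ
        ({![1, 0, 0, 0, 0, 0], ![(θ : ℂ), 0, 0, 0, 0, 0]} : Set (Fin 6 → ℂ))) = 2 ∧
    Submodule.span ℤ ({![1, 0, 0, 0, 0, 0], ![(θ : ℂ), 0, 0, 0, 0, 0]} : Set (Fin 6 → ℂ))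
      ≤ Submodule.span ℤ (Set.range (η θ)) ∧
    ∃ P : Submodule ℤ (Fin 6 → ℂ),
      P ≤ Submodule.span ℤ (Set.range (η θ)) ∧
      Submodule.span ℤ
          ({![1, 0, 0, 0, 0, 0], ![(θ : ℂ), 0, 0, 0, 0, 0]} : Set (Fin 6 → ℂ)) ⊓ P = ⊥ ∧
      Submodule.span ℤ
          ({![1, 0, 0, 0, 0, 0], ![(θ : ℂ), 0, 0, 0, 0, 0]} : Set (Fin 6 → ℂ)) ⊔ P
        = Submodule.span ℤ (Set.range (η θ)) := by
  set v1 : Fin 6 → ℂ := ![1, 0, 0, 0, 0, 0] with hv1def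
  set v2 : Fin 6 → ℂ := ![(θ : ℂ), 0, 0, 0, 0, 0] with hv2def
  set M : Submodule ℤ (Fin 6 → ℂ) := Submodule.span ℤ (Set.range (η θ)) with hMdef
  have hηM : ∀ i, η θ i ∈ M := fun i => Submodule.subset_span ⟨i, rfl⟩
  have hv1M : v1 ∈ M := by
    rw [hv1def, hv1eq θ]
    exact Submodule.sub_mem _ (Submodule.add_mem _ (Submodule.sub_mem _ (Submodule.add_mem _
      (Submodule.add_mem _ (Submodule.sub_mem _ (Submodule.add_mem _ (hηM 0) (hηM 1))
        (Submodule.smul_mem _ 2 (hηM 2))) (hηM 3)) (hηM 4))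
      (Submodule.smul_mem _ 2 (hηM 5))) (hηM 6)) (hηM 8)
  have hv2M : v2 ∈ M := by
    rw [hv2def, hv2eq θ]
    exact Submodule.add_mem _ (Submodule.add_mem _ (Submodule.add_mem _ (Submodule.sub_mem _
      (Submodule.add_mem _ (Submodule.neg_mem _ (hηM 0)) (Submodule.smul_mem _ 2 (hηM 2)))
      (hηM 3)) (Submodule.smul_mem _ 2 (hηM 5))) (Submodule.smul_mem _ 2 (hηM 7)))
      (Submodule.smul_mem _ 2 (hηM 8))
  have hli : LinearIndependent ℤ ![v1, v2] := by
    rw [LinearIndependent.pair_iff]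
    intro s t hst
    have h0 := congrFun hst 0
    simp only [hv1def, hv2def, Pi.add_apply, Pi.smul_apply, Matrix.cons_val_zero,
      zsmul_eq_mul, Pi.mul_apply, Pi.zero_apply] at h0
    exact complex_theta hθ (by linear_combination h0)
  have hset : ({v1, v2} : Set (Fin 6 → ℂ)) = Set.range ![v1, v2] :=
    (Matrix.range_cons_cons_empty v1 v2 _).symm
  constructor
  · exact hv2eq θ
  refine ⟨?_, ?_, ?_, ?_⟩
  · rw [hset]
    exact Module.Free.of_basis (Module.Basis.span hli)
  · rw [hset]
    simpa using finrank_span_eq_card hli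
  · rw [Submodule.span_le]
    rintro x hx
    simp only [Set.mem_insert_iff, Set.mem_singleton_iff] at hx
    rcases hx with rfl | rfl
    · exact hv1M
    · exact hv2M
  · refine ⟨Submodule.span ℤ (Set.range (μv θ)), ?_, ?_, ?_⟩
    · rw [Submodule.span_le]
      rintro x ⟨i, rfl⟩
      fin_cases i
      exacts [hηM 2, hηM 3, hηM 4, hηM 5, hηM 6, hηM 7, hηM 8]
    · rw [eq_bot_iff]
      intro x hx
      rw [Submodule.mem_inf] at hx
      obtain ⟨hxN, hxP⟩ := hx
      obtain ⟨a, b, hab⟩ := Submodule.mem_span_pair.mp hxN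
      obtain ⟨c, hc⟩ := (Submodule.mem_span_range_iff_exists_fun ℤ).mp hxP
      have key := hc.trans hab.symm
      rw [show μv θ = ![![1/4, 1/4, 0, 1/4, 0, 0],
        ![1/2, 0, 0, 0, 1/2, 0],
        ![1/2, 0, (1 - I)/4, 0, 0, 0],
        ![1/4, 0, 1/4, 0, 1/4, 0],
        ![(θ : ℂ)/4, (1 + I)/8, (1 + I)/8, 1/8, 1/8, 1/4],
        ![(θ : ℂ)/4, (-1 + I)/8, (-1 + I)/8, -(1/8), -(1/8), -(1/4)],
        ![(θ : ℂ)/4, (-1 - I)/8, (-1 - I)/8, 1/8, 1/8, 1/4]] from rfl, hv1def, hv2def] at key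
      have h0 := congrFun key 0
      have h1 := congrFun key 1
      have h2 := congrFun key 2
      have h3 := congrFun key 3
      have h4 := congrFun key 4
      have h5 := congrFun key 5
      simp only [Fin.sum_univ_seven, Pi.add_apply, Pi.smul_apply, zsmul_eq_mul,
        show (5:Fin 7) = Fin.succ 4 from rfl, show (6:Fin 7) = Fin.succ 5 from rfl,
        show (5:Fin 6) = Fin.succ 4 from rfl,
        Matrix.cons_val_succ, Matrix.cons_val_zero, Matrix.cons_val_one, Matrix.head_cons,
        Matrix.cons_val_two, Matrix.cons_val_three, Matrix.cons_val_four,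
        Matrix.tail_cons, Pi.mul_apply, Pi.intCast_apply, mul_zero, add_zero, zero_add, mul_one]
        at h0 h1 h2 h3 h4 h5
      simp only [show (Fin.succ 4 : Fin 7) = 5 from rfl,
        show ((Fin.succ 4).succ : Fin 7) = 6 from rfl] at h0 h1 h2 h3 h4 h5
      obtain ⟨e0a, e0b⟩ := complex_theta hθ
        (show ((4*a - (c 0 + 2*c 1 + 2*c 2 + c 3) : ℤ) : ℂ)
            + ((4*b - (c 4 + c 5 + c 6) : ℤ) : ℂ) * (θ : ℂ) = 0 by
          push_cast; linear_combination (-4 : ℂ) * h0)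
      obtain ⟨e1a, e1b⟩ := complex_int_pair
        (show ((2*c 0 + c 4 - c 5 - c 6 : ℤ) : ℂ) + ((c 4 + c 5 - c 6 : ℤ) : ℂ) * I = 0 by
          push_cast; linear_combination (8 : ℂ) * h1)
      obtain ⟨e2a, e2b⟩ := complex_int_pair
        (show ((2*c 2 + 2*c 3 + c 4 - c 5 - c 6 : ℤ) : ℂ)
            + ((-2*c 2 + c 4 + c 5 - c 6 : ℤ) : ℂ) * I = 0 by
          push_cast; linear_combination (8 : ℂ) * h2)
      have e3 : (2*c 0 + c 4 - c 5 + c 6 : ℤ) = 0 := by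
        exact_mod_cast show ((2*c 0 + c 4 - c 5 + c 6 : ℤ) : ℂ) = 0 by
          push_cast; linear_combination (8 : ℂ) * h3
      have e4 : (4*c 1 + 2*c 3 + c 4 - c 5 + c 6 : ℤ) = 0 := by
        exact_mod_cast show ((4*c 1 + 2*c 3 + c 4 - c 5 + c 6 : ℤ) : ℂ) = 0 by
          push_cast; linear_combination (8 : ℂ) * h4
      have e5 : (c 4 - c 5 + c 6 : ℤ) = 0 := by
        exact_mod_cast show ((c 4 - c 5 + c 6 : ℤ) : ℂ) = 0 by
          push_cast; linear_combination (4 : ℂ) * h5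
      have ha : a = 0 := by omega
      have hb : b = 0 := by omega
      rw [← hab, ha, hb]
      simp
    · have hPM : Submodule.span ℤ (Set.range (μv θ)) ≤ M := by
        rw [Submodule.span_le]
        rintro x ⟨i, rfl⟩
        fin_cases i
        exacts [hηM 2, hηM 3, hηM 4, hηM 5, hηM 6, hηM 7, hηM 8]
      apply le_antisymm
      · apply sup_le
        · rw [Submodule.span_le]
          rintro x hx
          simp only [Set.mem_insert_iff, Set.mem_singleton_iff] at hx
          rcases hx with rfl | rfl
          · exact hv1M
          · exact hv2M
        · exact hPM
      · rw [hMdef, Submodule.span_le]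
        rintro x ⟨i, rfl⟩
        set S := Submodule.span ℤ ({v1, v2} : Set (Fin 6 → ℂ))
          ⊔ Submodule.span ℤ (Set.range (μv θ)) with hSdef
        have hv1S : v1 ∈ S := le_sup_left (α := Submodule ℤ (Fin 6 → ℂ))
          (Submodule.subset_span (by simp))
        have hv2S : v2 ∈ S := le_sup_left (α := Submodule ℤ (Fin 6 → ℂ))
          (Submodule.subset_span (by simp))
        have hη2S : η θ 2 ∈ S := le_sup_right (α := Submodule ℤ (Fin 6 → ℂ))
          (Submodule.subset_span ⟨0, rfl⟩)
        have hη3S : η θ 3 ∈ S := le_sup_right (α := Submodule ℤ (Fin 6 → ℂ))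
          (Submodule.subset_span ⟨1, rfl⟩)
        have hη4S : η θ 4 ∈ S := le_sup_right (α := Submodule ℤ (Fin 6 → ℂ))
          (Submodule.subset_span ⟨2, rfl⟩)
        have hη5S : η θ 5 ∈ S := le_sup_right (α := Submodule ℤ (Fin 6 → ℂ))
          (Submodule.subset_span ⟨3, rfl⟩)
        have hη6S : η θ 6 ∈ S := le_sup_right (α := Submodule ℤ (Fin 6 → ℂ))
          (Submodule.subset_span ⟨4, rfl⟩)
        have hη7S : η θ 7 ∈ S := le_sup_right (α := Submodule ℤ (Fin 6 → ℂ))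
          (Submodule.subset_span ⟨5, rfl⟩)
        have hη8S : η θ 8 ∈ S := le_sup_right (α := Submodule ℤ (Fin 6 → ℂ))
          (Submodule.subset_span ⟨6, rfl⟩)
        have hη0S : η θ 0 ∈ S := by
          have h := hv2eq θ
          rw [← hv2def] at h
          have h' : η θ 0 = (2 : ℤ) • η θ 2 - η θ 3 + (2 : ℤ) • η θ 5
              + (2 : ℤ) • η θ 7 + (2 : ℤ) • η θ 8 - v2 := by
            rw [h]; abel
          rw [h']
          exact Submodule.sub_mem _ (Submodule.add_mem _ (Submodule.add_mem _
            (Submodule.add_mem _ (Submodule.sub_mem _ (Submodule.smul_mem _ 2 hη2S) hη3S)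
            (Submodule.smul_mem _ 2 hη5S)) (Submodule.smul_mem _ 2 hη7S))
            (Submodule.smul_mem _ 2 hη8S)) hv2S
        have hη1S : η θ 1 ∈ S := by
          have h := heta1eq θ
          rw [← hv1def, ← hv2def] at h
          rw [h]
          exact Submodule.sub_mem _ (Submodule.sub_mem _ (Submodule.sub_mem _
            (Submodule.sub_mem _ (Submodule.add_mem _ hv1S hv2S) hη4S) hη6S)
            (Submodule.smul_mem _ 2 hη7S)) hη8S
        fin_cases i
        exacts [hη0S, hη1S, hη2S, hη3S, hη4S, hη5S, hη6S, hη7S, hη8S]
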